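/- arXiv:2207.03285 — 3 statements merged into one kernel-verified Lean document; each statement's English description precedes it below -/
import Mathlib

section
/- Let F be a totally real number field of degree g and let k : I → ℕ be a function on the set I of real embeddings of F. Then ∏_{τ ∈ I} τ(ε)^{k(τ)} = 1 holds for every totally positive unit ε of 𝓞_F if and only if k is constant, i.e. all the values k(τ) for τ ∈ I are equal. -/
/-!
For a totally positive unit `ε`, the product of all `τ ε` is the norm of `ε`, which is `1`;
this gives the easy direction. Conversely, `u²` is totally positive for every unit `u`, so the
hypothesis gives `∑ k τ · log |τ u| = 0`, while the product formula gives `∑ log |τ u| = 0`.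
Hence `τ ↦ k τ - k τ₀` defines a linear form on the logarithmic space that vanishes on the unit
lattice; by Dirichlet's unit theorem this lattice spans the space, so the form is zero.
-/

open NumberField

open Matrix in
theorem Matrix.eq_zero_of_forall_dotProduct_eq_zero_of_span_eq_top {ι R : Type*} [Fintype ι]
    [CommSemiring R] {s : Set (ι → R)} (hs : Submodule.span R s = ⊤) {d : ι → R}
    (h : ∀ x ∈ s, d ⬝ᵥ x = 0) : d = 0 := by
  have hd : dotProductBilin R R d = 0 := LinearMap.ext_on hs h
  exact dotProduct_eq_zero_iff.mp fun x ↦ LinearMap.congr_fun hd x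

open InfinitePlace Units.dirichletUnitTheorem Finset in
theorem NumberField.Units.eq_of_forall_sum_mul_mult_mul_log_eq_zero {K : Type*} [Field K]
    [NumberField K] {c : InfinitePlace K → ℝ}
    (h : ∀ u : (𝓞 K)ˣ, ∑ w, c w * (w.mult * Real.log (w u)) = 0) (w w' : InfinitePlace K) :
    c w = c w' := by
  classical
  suffices hc : ∀ w, c w = c w₀ by rw [hc w, hc w']
  let d : logSpace K := fun w ↦ c w - c w₀
  have hd : d = 0 := by
    refine Matrix.eq_zero_of_forall_dotProduct_eq_zero_of_span_eq_top
      (unitLattice_span_eq_top K) ?_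
    rintro _ ⟨u, -, rfl⟩
    calc d ⬝ᵥ logEmbedding K u
        = ∑ w, (c w - c w₀) * (w.mult * Real.log (w u.toMul)) := by
          rw [Fintype.sum_eq_add_sum_subtype_ne _ w₀]
          simp only [dotProduct, sub_self, zero_mul, zero_add, d]
          rfl
      _ = ∑ w, c w * (w.mult * Real.log (w u.toMul))
            - c w₀ * ∑ w : InfinitePlace K, w.mult * Real.log (w u.toMul) := by
          simp only [sub_mul, sum_sub_distrib, mul_sum]
      _ = 0 := by rw [h, sum_mult_mul_log, mul_zero, sub_zero]
  intro w
  by_cases hw : w = w₀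
  · rw [hw]
  · exact sub_eq_zero.mp (congr_fun hd ⟨w, hw⟩)

namespace NumberField.ComplexEmbedding

variable {F : Type*} [Field F]

theorem isReal_ofRealHom_comp (τ : F →+* ℝ) : IsReal (Complex.ofRealHom.comp τ) := by
  rw [isReal_iff]
  ext x
  simp [Complex.conj_ofReal]

noncomputable def realEmbeddingEquiv : (F →+* ℝ) ≃ {φ : F →+* ℂ // IsReal φ} where
  toFun τ := ⟨Complex.ofRealHom.comp τ, isReal_ofRealHom_comp τ⟩
  invFun φ := φ.2.embedding
  left_inv τ := by
    ext x
    exact Complex.ofReal_injective <| (isReal_ofRealHom_comp τ).coe_embedding_apply x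
  right_inv φ := Subtype.ext <| RingHom.ext φ.2.coe_embedding_apply

end NumberField.ComplexEmbedding

namespace NumberField.InfinitePlace

variable {F : Type*} [Field F]

theorem card_realEmbedding [NumberField F] : Fintype.card (F →+* ℝ) = nrRealPlaces F := by
  classical
  exact (Fintype.card_congr ComplexEmbedding.realEmbeddingEquiv).trans (card_real_embeddings F)

theorem isTotallyReal_of_card_realEmbedding_eq_finrank [NumberField F]
    (h : Fintype.card (F →+* ℝ) = Module.finrank ℚ F) : IsTotallyReal F := by
  rw [← nrComplexPlaces_eq_zero_iff]
  have := card_add_two_mul_card_eq_rank F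
  have := card_realEmbedding (F := F)
  omega

variable [IsTotallyReal F]

noncomputable def realEmbeddingEquivInfinitePlace : (F →+* ℝ) ≃ InfinitePlace F :=
  ComplexEmbedding.realEmbeddingEquiv.trans <|
    mkReal.trans <| Equiv.subtypeUnivEquiv IsTotallyReal.isReal

theorem realEmbeddingEquivInfinitePlace_apply (τ : F →+* ℝ) (x : F) :
    realEmbeddingEquivInfinitePlace τ x = |τ x| := by
  simp [realEmbeddingEquivInfinitePlace, ComplexEmbedding.realEmbeddingEquiv, apply]

variable [NumberField F]

theorem prod_abs_realEmbedding_eq_abs_norm (x : F) :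
    ∏ τ : F →+* ℝ, |τ x| = |(Algebra.norm ℚ x : ℝ)| := by
  simpa [← realEmbeddingEquivInfinitePlace.prod_comp, realEmbeddingEquivInfinitePlace_apply]
    using prod_eq_abs_norm x

theorem eq_of_forall_sum_mul_log_abs_realEmbedding_eq_zero {c : (F →+* ℝ) → ℝ}
    (h : ∀ u : (𝓞 F)ˣ, ∑ τ : F →+* ℝ, c τ * Real.log |τ u| = 0) (τ τ' : F →+* ℝ) :
    c τ = c τ' := by
  let e : (F →+* ℝ) ≃ InfinitePlace F := realEmbeddingEquivInfinitePlace
  simpa using Units.eq_of_forall_sum_mul_mult_mul_log_eq_zero (c := c ∘ e.symm)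
    (fun u ↦ by simpa [← e.sum_comp, e, realEmbeddingEquivInfinitePlace_apply] using h u)
    (e τ) (e τ')

end NumberField.InfinitePlace

open InfinitePlace in
/-- Let `F` be a totally real number field of degree `g` (totally real: the number of real
embeddings equals the degree) and `k : I → ℕ` a function on the set `I` of real embeddings
of `F`. Then `∏_{τ ∈ I} τ(ε) ^ k(τ) = 1` for every totally positive unit `ε` of `𝓞 F`
if and only if `k` is constant. -/
theorem prod_emb_unit_pow_eq_one_iff_constant (F : Type) [Field F] [NumberField F]
    (htotreal : Fintype.card (F →+* ℝ) = Module.finrank ℚ F)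
    (k : (F →+* ℝ) → ℕ) :
    (∀ ε : (𝓞 F)ˣ, (∀ τ : F →+* ℝ, 0 < τ ((ε : 𝓞 F) : F)) →
        ∏ τ : F →+* ℝ, (τ ((ε : 𝓞 F) : F)) ^ (k τ) = 1) ↔
      ∀ τ τ' : F →+* ℝ, k τ = k τ' := by
  have := isTotallyReal_of_card_realEmbedding_eq_finrank htotreal
  constructor
  · intro H τ τ'
    have hlog (u : (𝓞 F)ˣ) : ∑ τ : F →+* ℝ, (k τ : ℝ) * Real.log |τ u| = 0 := by
      have hu (τ : F →+* ℝ) : τ u ≠ 0 := (map_ne_zero τ).mpr u.coe_ne_zero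
      have hsq := H (u ^ 2) fun τ ↦ by simpa using pow_pos (abs_pos.mpr (hu τ)) 2
      have hprod : ∏ τ : F →+* ℝ, |τ u| ^ (2 * k τ) = 1 := by simpa [pow_mul] using hsq
      simpa [Real.log_prod, hu, Real.log_pow, mul_assoc, ← Finset.mul_sum]
        using congr_arg Real.log hprod
    exact_mod_cast eq_of_forall_sum_mul_log_abs_realEmbedding_eq_zero hlog τ τ'
  · intro hk ε hε
    have hnorm : ∏ τ : F →+* ℝ, τ ε = 1 := by
      simpa [abs_of_pos (hε _), ← Rat.cast_abs] using prod_abs_realEmbedding_eq_abs_norm (ε : F)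
    obtain ⟨τ₀⟩ : Nonempty (F →+* ℝ) :=
      realEmbeddingEquivInfinitePlace.nonempty_congr.mpr inferInstance
    simp_rw [hk _ τ₀, Finset.prod_pow, hnorm, one_pow]
end

section
/- Let F be a totally real number field, 𝔞 a nonzero fractional ideal of F, and 𝔭 a nonzero prime ideal of 𝓞_F. Let ξ be a torsion character of the fractional ideal 𝔭𝔞 with (finite) Δ-orbit O, and let α ∈ 𝔞. Let S be the set of torsion characters ζ of 𝔞 whose restriction to 𝔭𝔞 belongs to O. Then S is finite, and (1/N𝔭) · Σ_{ζ ∈ S} ζ(α) equals ξΔ(α) = Σ_{η ∈ O} η(α) if α ∈ 𝔭𝔞, and equals 0 if α ∉ 𝔭𝔞; here N𝔭 denotes the absolute norm of 𝔭. (This is the orbit-summed form of the lemma '(1/N𝔭) Σ_{ζΔ ↦ ξΔ} ζΔ(α) = ξΔ(α) or 0', since Σ_{ζΔ ↦ ξΔ} ζΔ(α) = Σ_{ζ ∈ S} ζ(α).) -/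
open NumberField
open scoped nonZeroDivisors

/-- The group `Δ` of totally positive units of the ring of integers of `F`. -/
def totPosUnits (F : Type) [Field F] [NumberField F] : Subgroup (𝓞 F)ˣ where
  carrier := {ε | ∀ τ : F →+* ℝ, 0 < τ ((ε : 𝓞 F) : F)}
  one_mem' := by intro τ; simp
  mul_mem' := by
    intro a b ha hb τ
    have := mul_pos (ha τ) (hb τ)
    simpa [map_mul] using this
  inv_mem' := by
    intro a ha τ
    have h := ha τ
    have h2 : (((a⁻¹ : (𝓞 F)ˣ) : 𝓞 F) : F) * (((a : (𝓞 F)ˣ) : 𝓞 F) : F) = 1 := by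
      have := congrArg (fun x : 𝓞 F => (x : F)) (Units.inv_mul a)
      simpa using this
    rw [eq_inv_of_mul_eq_one_left h2, map_inv₀]
    exact inv_pos.2 h

/-- The fractional ideals of a number field `F`. -/
abbrev FracIdl (F : Type) [Field F] [NumberField F] : Type :=
  FractionalIdeal (𝓞 F)⁰ F

/-- A character of the additive group of a fractional ideal `𝔞`, with values in `ℂ`
(equivalently, a group homomorphism from the additive group `𝔞` to `ℂˣ`). -/
abbrev IdealChar (F : Type) [Field F] [NumberField F] (𝔞 : FracIdl F) : Type :=
  AddChar ↥(𝔞 : Submodule (𝓞 F) F) ℂ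

variable {F : Type} [Field F] [NumberField F]

/-- A character `ζ` of `𝔞` has level `𝔤` if `ζ` is trivial on `𝔤𝔞`. -/
def HasLevel {𝔞 : FracIdl F} (ζ : IdealChar F 𝔞) (𝔤 : Ideal (𝓞 F)) : Prop :=
  ∀ (x : F) (hx : x ∈ (𝔞 : Submodule (𝓞 F) F)),
    x ∈ (𝔤 : FracIdl F) * 𝔞 → ζ ⟨x, hx⟩ = 1

/-- A torsion character of `𝔞` is a character of finite order, equivalently one whose
kernel contains `𝔤𝔞` for some nonzero integral ideal `𝔤`. -/
def IsTorsionChar {𝔞 : FracIdl F} (ζ : IdealChar F 𝔞) : Prop :=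
  ∃ 𝔤 : Ideal (𝓞 F), 𝔤 ≠ 0 ∧ HasLevel ζ 𝔤

/-- A character of `𝔞` is primitive of level `𝔤` if it has level `𝔤` but does not have
level `𝔤'` for any integral ideal `𝔤'` strictly containing `𝔤`. -/
def IsPrimitiveChar {𝔞 : FracIdl F} (ζ : IdealChar F 𝔞) (𝔤 : Ideal (𝓞 F)) : Prop :=
  HasLevel ζ 𝔤 ∧ ∀ 𝔤' : Ideal (𝓞 F), 𝔤 < 𝔤' → ¬ HasLevel ζ 𝔤'

lemma coeIdeal_mul_le (𝔤 : Ideal (𝓞 F)) (𝔞 : FracIdl F) :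
    (𝔤 : FracIdl F) * 𝔞 ≤ 𝔞 := by
  rw [FractionalIdeal.mul_le]
  intro i hi j hj
  rw [FractionalIdeal.mem_coeIdeal] at hi
  obtain ⟨a, -, rfl⟩ := hi
  rw [← Algebra.smul_def]
  exact FractionalIdeal.mem_coe.1
    (Submodule.smul_mem _ a (FractionalIdeal.mem_coe.2 hj))

/-- Restriction of a character of `𝔞` to the subideal `𝔭𝔞`. -/
def restrictChar {𝔞 : FracIdl F} (𝔭 : Ideal (𝓞 F)) (ζ : IdealChar F 𝔞) :
    IdealChar F ((𝔭 : FracIdl F) * 𝔞) :=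
  ζ.compAddMonoidHom
    (Submodule.inclusion (FractionalIdeal.coe_le_coe.2 (coeIdeal_mul_le 𝔭 𝔞))).toAddMonoidHom

/-- Multiplication by the unit `ε` as an additive endomorphism of (the additive group of)
the fractional ideal `𝔞`. -/
def unitScaleHom {𝔞 : FracIdl F} (ε : (𝓞 F)ˣ) :
    ↥(𝔞 : Submodule (𝓞 F) F) →+ ↥(𝔞 : Submodule (𝓞 F) F) where
  toFun a := ⟨(ε : 𝓞 F) • (a : F), Submodule.smul_mem _ _ a.2⟩
  map_zero' := by ext; simp
  map_add' a b := by ext; simp [smul_add]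

/-- The action of a unit `ε` on characters of `𝔞`: `(ε · ζ)(α) = ζ(εα)`. -/
def charSmul {𝔞 : FracIdl F} (ε : (𝓞 F)ˣ) (ζ : IdealChar F 𝔞) : IdealChar F 𝔞 :=
  ζ.compAddMonoidHom (unitScaleHom ε)

/-- The `Δ`-orbit of a character `ξ` of `𝔞` under the totally positive units. -/
def charOrbit {𝔞 : FracIdl F} (ξ : IdealChar F 𝔞) : Set (IdealChar F 𝔞) :=
  {ζ | ∃ ε ∈ totPosUnits F, ζ = charSmul ε ξ}

/-- `ξΔ(α) := Σ_{η ∈ Δ-orbit of ξ} η(α)` (a finite sum, the orbit of a torsion character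
being finite). -/
noncomputable def orbitSum {𝔞 : FracIdl F} (ξ : IdealChar F 𝔞)
    (a : ↥(𝔞 : Submodule (𝓞 F) F)) : ℂ :=
  ∑ᶠ η ∈ charOrbit ξ, η a

/-- Totally positive elements of `F`. -/
def IsTotPos (x : F) : Prop := ∀ τ : F →+* ℝ, 0 < τ x

/-- The set `𝔞₊` of totally positive elements of the fractional ideal `𝔞`. -/
abbrev posElts (𝔞 : FracIdl F) : Type :=
  {x : F // x ∈ (𝔞 : Submodule (𝓞 F) F) ∧ IsTotPos x}

/-- The equivalence relation on `𝔞₊` identifying elements in the same orbit under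
multiplication by totally positive units. -/
def deltaSetoid (𝔞 : FracIdl F) : Setoid (posElts 𝔞) where
  r x y := ∃ ε ∈ totPosUnits F, (y : F) = (((ε : 𝓞 F) : F)) * (x : F)
  iseqv := by
    constructor
    · intro x
      exact ⟨1, one_mem _, by simp⟩
    · rintro x y ⟨ε, hε, hxy⟩
      refine ⟨ε⁻¹, inv_mem hε, ?_⟩
      rw [hxy, ← mul_assoc]
      have h2 : (((ε⁻¹ : (𝓞 F)ˣ) : 𝓞 F) : F) * (((ε : (𝓞 F)ˣ) : 𝓞 F) : F) = 1 := by
        have := congrArg (fun t : 𝓞 F => (t : F)) (Units.inv_mul ε)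
        simpa using this
      rw [h2, one_mul]
    · rintro x y z ⟨ε, hε, hxy⟩ ⟨η, hη, hyz⟩
      refine ⟨η * ε, mul_mem hη hε, ?_⟩
      rw [hyz, hxy, ← mul_assoc]
      congr 1

/-- The Lerch zeta function `ℒ(ξΔ, s) = Σ_{[α] ∈ Δ\𝔞₊} ξΔ(α) · N(𝔞⁻¹α)^{−s}`
attached to a (torsion) character `ξ` of `𝔞`; here the summand is evaluated at the
chosen representative of each orbit `[α]` (it does not depend on this choice), and
`N(𝔞⁻¹α)` is the absolute norm of the fractional ideal `α𝔞⁻¹`. -/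
noncomputable def lerchZeta (𝔞 : FracIdl F) (ξ : IdealChar F 𝔞) (s : ℂ) : ℂ :=
  ∑' q : Quotient (deltaSetoid 𝔞),
    orbitSum ξ ⟨(q.out : F), q.out.2.1⟩ *
      ((FractionalIdeal.absNorm
          (FractionalIdeal.spanSingleton (𝓞 F)⁰ (q.out : F) * 𝔞⁻¹) : ℚ) : ℂ) ^ (-s)

/-!
Since `ℂˣ` is divisible, hence an injective `ℤ`-module, every character `η` of `𝔭𝔞` extends to
`𝔞`, and two extensions differ by a character of `𝔞/𝔭𝔞 ≅ 𝓞/𝔭`, a group of order `N𝔭`. So the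
extensions of `η` form a torsor under the dual of `𝔞/𝔭𝔞`, and orthogonality of the characters of
this finite group gives `Σ_{ζ ↦ η} ζ(α) = N𝔭 · η(α)` for `α ∈ 𝔭𝔞` and `0` otherwise; summing over
the orbit `O` gives the theorem. An extension of a character of level `𝔤` has level `𝔤𝔭`, so the
torsion condition in `S` is automatic.
-/

noncomputable instance Complex.instDivisibleByAdditiveUnitsInt : DivisibleBy (Additive ℂˣ) ℤ :=
  divisibleByOfSMulRightSurj _ _ fun {n} hn y =>
    ⟨.ofMul (Units.mk0 (Complex.exp (Complex.log y.toMul / n)) (Complex.exp_ne_zero _)), by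
      apply Additive.toMul.injective
      ext
      simp [← Complex.exp_int_mul, mul_div_cancel₀ _ (Int.cast_ne_zero.2 hn : (n : ℂ) ≠ 0),
        Complex.exp_log]⟩

namespace AddChar

variable {M N : Type*} [AddCommGroup M] [AddCommGroup N]

theorem exists_compAddMonoidHom_eq {i : N →+ M} (hi : Function.Injective i) (η : AddChar N ℂ) :
    ∃ ζ : AddChar M ℂ, ζ.compAddMonoidHom i = η := by
  let ηu : N →+ Additive ℂˣ := toAddMonoidHomEquiv (toMonoidHomEquiv.symm η.toMonoidHom.toHomUnits)
  obtain ⟨h, hh⟩ := (Module.Baer.of_divisible _).extension_property_addMonoidHom i hi ηu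
  refine ⟨(Units.coeHom ℂ).compAddChar (toAddMonoidHomEquiv.symm h), ?_⟩
  ext n
  change ((h.comp i n).toMul : ℂ) = η n
  rw [hh]
  rfl

theorem exists_compAddMonoidHom_mk_eq {H : AddSubgroup M} {R : Type*} [CommMonoid R]
    (ψ : AddChar M R) (hψ : ∀ m ∈ H, ψ m = 1) :
    ∃ χ : AddChar (M ⧸ H) R, χ.compAddMonoidHom (QuotientAddGroup.mk' H) = ψ :=
  ⟨toAddMonoidHomEquiv.symm (QuotientAddGroup.lift H ψ.toAddMonoidHom fun m hm => by
    simp [hψ m hm]), rfl⟩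

variable {i : N →+ M}

theorem setOf_compAddMonoidHom_eq_range {R : Type*} [Field R] {η : AddChar N R}
    {ζ₀ : AddChar M R} (hζ₀ : ζ₀.compAddMonoidHom i = η) :
    {ζ : AddChar M R | ζ.compAddMonoidHom i = η} =
      Set.range fun χ : AddChar (M ⧸ i.range) R =>
        ζ₀ * χ.compAddMonoidHom (QuotientAddGroup.mk' i.range) := by
  ext ζ
  constructor
  · intro hζ
    have hψ : ∀ m ∈ i.range, (ζ * ζ₀⁻¹) m = 1 := by
      rintro _ ⟨n, rfl⟩
      rw [mul_apply, inv_apply', ← compAddMonoidHom_apply, ← compAddMonoidHom_apply, hζ, hζ₀]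
      exact mul_inv_cancel₀ (η.val_isUnit n).ne_zero
    obtain ⟨χ, hχ⟩ := exists_compAddMonoidHom_mk_eq _ hψ
    refine ⟨χ, ?_⟩
    ext m
    rw [mul_apply, hχ, mul_apply, inv_apply', mul_comm (ζ m),
      mul_inv_cancel_left₀ (ζ₀.val_isUnit m).ne_zero]
  · rintro ⟨χ, rfl⟩
    ext n
    simp [← hζ₀, (QuotientAddGroup.eq_zero_iff (i n)).2 (AddMonoidHom.mem_range.2 ⟨n, rfl⟩)]

theorem setOf_compAddMonoidHom_mem_eq_biUnion {R : Type*} [CommMonoid R]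
    (O : Set (AddChar N R)) :
    {ζ : AddChar M R | ζ.compAddMonoidHom i ∈ O} =
      ⋃ η ∈ O, {ζ : AddChar M R | ζ.compAddMonoidHom i = η} := by
  ext
  simp

variable [i.range.FiniteIndex] {η : AddChar N ℂ} {ζ₀ : AddChar M ℂ}

theorem finite_setOf_compAddMonoidHom_eq (η : AddChar N ℂ) :
    {ζ : AddChar M ℂ | ζ.compAddMonoidHom i = η}.Finite := by
  rcases Set.eq_empty_or_nonempty {ζ : AddChar M ℂ | ζ.compAddMonoidHom i = η} with h | ⟨ζ₀, hζ₀⟩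
  · exact h ▸ Set.finite_empty
  · exact setOf_compAddMonoidHom_eq_range hζ₀ ▸ Set.finite_range _

open scoped Classical in
theorem finsum_mem_setOf_compAddMonoidHom_eq (hζ₀ : ζ₀.compAddMonoidHom i = η) (m : M) :
    ∑ᶠ ζ ∈ {ζ : AddChar M ℂ | ζ.compAddMonoidHom i = η}, ζ m =
      if m ∈ i.range then i.range.index * ζ₀ m else 0 := by
  have hinj : Function.Injective fun χ : AddChar (M ⧸ i.range) ℂ =>
      ζ₀ * χ.compAddMonoidHom (QuotientAddGroup.mk' i.range) := fun χ χ' h =>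
    compAddMonoidHom_injective_left _ (QuotientAddGroup.mk'_surjective _) <|
      DFunLike.ext _ _ fun m => by
        simpa [(ζ₀.val_isUnit m).ne_zero] using DFunLike.congr_fun h m
  rw [setOf_compAddMonoidHom_eq_range hζ₀, finsum_mem_range hinj, finsum_eq_sum_of_fintype]
  have := Fintype.ofFinite (M ⧸ i.range)
  simp only [AddChar.mul_apply, compAddMonoidHom_apply, QuotientAddGroup.coe_mk', ← Finset.mul_sum]
  rw [sum_apply_eq_ite, AddSubgroup.index, Nat.card_eq_fintype_card]
  simp only [QuotientAddGroup.eq_zero_iff]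
  split_ifs <;> ring

theorem finsum_mem_setOf_compAddMonoidHom_eq_apply (hi : Function.Injective i) (η : AddChar N ℂ)
    (n : N) :
    ∑ᶠ ζ ∈ {ζ : AddChar M ℂ | ζ.compAddMonoidHom i = η}, ζ (i n) = i.range.index * η n := by
  obtain ⟨ζ₀, hζ₀⟩ := exists_compAddMonoidHom_eq hi η
  rw [finsum_mem_setOf_compAddMonoidHom_eq hζ₀, if_pos (AddMonoidHom.mem_range.2 ⟨n, rfl⟩), ← hζ₀,
    compAddMonoidHom_apply]

theorem finsum_mem_setOf_compAddMonoidHom_eq_of_notMem (η : AddChar N ℂ) {m : M}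
    (hm : m ∉ i.range) : ∑ᶠ ζ ∈ {ζ : AddChar M ℂ | ζ.compAddMonoidHom i = η}, ζ m = 0 := by
  rcases Set.eq_empty_or_nonempty {ζ : AddChar M ℂ | ζ.compAddMonoidHom i = η} with h | ⟨ζ₀, hζ₀⟩
  · rw [h, finsum_mem_empty]
  · rw [finsum_mem_setOf_compAddMonoidHom_eq hζ₀, if_neg hm]

variable {O : Set (AddChar N ℂ)}

theorem finite_setOf_compAddMonoidHom_mem (hO : O.Finite) :
    {ζ : AddChar M ℂ | ζ.compAddMonoidHom i ∈ O}.Finite := by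
  rw [setOf_compAddMonoidHom_mem_eq_biUnion]
  exact hO.biUnion fun η _ => finite_setOf_compAddMonoidHom_eq η

theorem finsum_mem_setOf_compAddMonoidHom_mem (hO : O.Finite) (m : M) :
    ∑ᶠ ζ ∈ {ζ : AddChar M ℂ | ζ.compAddMonoidHom i ∈ O}, ζ m =
      ∑ᶠ η ∈ O, ∑ᶠ ζ ∈ {ζ : AddChar M ℂ | ζ.compAddMonoidHom i = η}, ζ m := by
  rw [setOf_compAddMonoidHom_mem_eq_biUnion]
  exact finsum_mem_biUnion (Set.pairwiseDisjoint_fiber _ O) hO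
    fun η _ => finite_setOf_compAddMonoidHom_eq η

theorem finsum_mem_setOf_compAddMonoidHom_mem_apply (hi : Function.Injective i) (hO : O.Finite)
    (n : N) :
    ∑ᶠ ζ ∈ {ζ : AddChar M ℂ | ζ.compAddMonoidHom i ∈ O}, ζ (i n) =
      i.range.index * ∑ᶠ η ∈ O, η n := by
  rw [finsum_mem_setOf_compAddMonoidHom_mem hO, mul_finsum_mem]
  exact finsum_mem_congr rfl fun η _ => finsum_mem_setOf_compAddMonoidHom_eq_apply hi η n

theorem finsum_mem_setOf_compAddMonoidHom_mem_of_notMem (hO : O.Finite) {m : M}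
    (hm : m ∉ i.range) :
    ∑ᶠ ζ ∈ {ζ : AddChar M ℂ | ζ.compAddMonoidHom i ∈ O}, ζ m = 0 := by
  rw [finsum_mem_setOf_compAddMonoidHom_mem hO]
  exact finsum_mem_eq_zero_of_forall_eq_zero fun η _ =>
    finsum_mem_setOf_compAddMonoidHom_eq_of_notMem η hm

end AddChar

namespace FractionalIdeal

variable {R K : Type*} [CommRing R] [Field K] [Algebra R K] {𝔞 : FractionalIdeal R⁰ K}
  {𝔭 : Ideal R}

theorem smul_mem_coeIdeal_mul {c : R} (hc : c ∈ 𝔭) {x : K} (hx : x ∈ 𝔞) :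
    c • x ∈ (𝔭 : FractionalIdeal R⁰ K) * 𝔞 := by
  rw [Algebra.smul_def]
  exact mul_mem_mul ((mem_coeIdeal _).2 ⟨c, hc, rfl⟩) hx

variable [IsFractionRing R K] [IsDedekindDomain R]

theorem exists_mem_notMem_coeIdeal_mul (h𝔞 : 𝔞 ≠ 0) (h𝔭 : 𝔭 ≠ ⊤) :
    ∃ x ∈ 𝔞, x ∉ (𝔭 : FractionalIdeal R⁰ K) * 𝔞 := by
  by_contra! hle
  refine h𝔭 (top_le_iff.1 ((coeIdeal_le_coeIdeal K).1 ?_))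
  calc ((⊤ : Ideal R) : FractionalIdeal R⁰ K) = 𝔞 * 𝔞⁻¹ := by
        rw [coeIdeal_top, mul_inv_cancel₀ h𝔞]
    _ ≤ (𝔭 * 𝔞) * 𝔞⁻¹ := mul_le_mul_left (fun x hx => hle x hx) _
    _ = 𝔭 := by rw [mul_assoc, mul_inv_cancel₀ h𝔞, mul_one]

theorem coeIdeal_mul_add_spanSingleton_eq (h𝔞 : 𝔞 ≠ 0) (h𝔭 : 𝔭.IsMaximal) {x : K}
    (hx : x ∈ 𝔞) (hx𝔭 : x ∉ (𝔭 : FractionalIdeal R⁰ K) * 𝔞) :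
    𝔭 * 𝔞 + spanSingleton R⁰ x = 𝔞 := by
  obtain ⟨J, hJ⟩ := le_one_iff_exists_coeIdeal.1 <|
    calc spanSingleton R⁰ x * 𝔞⁻¹ ≤ 𝔞 * 𝔞⁻¹ :=
          mul_le_mul_left (spanSingleton_le_iff_mem.2 hx) _
      _ = 1 := mul_inv_cancel₀ h𝔞
  have hJ𝔞 : (J : FractionalIdeal R⁰ K) * 𝔞 = spanSingleton R⁰ x := by
    rw [hJ, mul_assoc, inv_mul_cancel₀ h𝔞, mul_one]
  have hJ𝔭 : ¬ J ≤ 𝔭 := fun hle => hx𝔭 <| by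
    rw [← spanSingleton_le_iff_mem, ← hJ𝔞]
    exact mul_le_mul_left ((coeIdeal_le_coeIdeal K).2 hle) _
  rw [← hJ𝔞, ← add_mul, ← coeIdeal_sup, h𝔭.1.2 _ (left_lt_sup.2 hJ𝔭), coeIdeal_top, one_mul]

theorem cardQuot_comap_coeIdeal_mul (h𝔞 : 𝔞 ≠ 0) (h𝔭 : 𝔭.IsMaximal) :
    Submodule.cardQuot ((((𝔭 : FractionalIdeal R⁰ K) * 𝔞 : FractionalIdeal R⁰ K) :
      Submodule R K).comap (𝔞 : Submodule R K).subtype) = Submodule.cardQuot 𝔭 := by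
  set B := (((𝔭 : FractionalIdeal R⁰ K) * 𝔞 : FractionalIdeal R⁰ K) : Submodule R K).comap
    (𝔞 : Submodule R K).subtype
  obtain ⟨x, hx, hx𝔭⟩ := exists_mem_notMem_coeIdeal_mul h𝔞 h𝔭.ne_top
  let φ : R →ₗ[R] ↥(𝔞 : Submodule R K) ⧸ B :=
    B.mkQ ∘ₗ LinearMap.toSpanSingleton R _ ⟨x, hx⟩
  have hφ_eq_zero (c : R) : φ c = 0 ↔ c • x ∈ (𝔭 : FractionalIdeal R⁰ K) * 𝔞 := by
    simp only [φ, B, LinearMap.comp_apply, LinearMap.toSpanSingleton_apply, Submodule.mkQ_apply,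
      Submodule.Quotient.mk_eq_zero, Submodule.mem_comap]
    rfl
  have hker : 𝔭 = LinearMap.ker φ := by
    refine h𝔭.eq_of_le (fun h => hx𝔭 ?_) fun c hc => ?_
    · simpa using (hφ_eq_zero 1).1 ((LinearMap.ker φ).eq_top_iff'.1 h 1)
    · exact (hφ_eq_zero c).2 (smul_mem_coeIdeal_mul hc hx)
  have hφ : Function.Surjective φ := by
    rintro ⟨y, hy⟩
    have hy' : y ∈ (((𝔭 : FractionalIdeal R⁰ K) * 𝔞 : FractionalIdeal R⁰ K) : Submodule R K) ⊔
        R ∙ x := by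
      rwa [← coe_spanSingleton R⁰, ← Submodule.add_eq_sup, ← coe_add,
        coeIdeal_mul_add_spanSingleton_eq h𝔞 h𝔭 hx hx𝔭]
    obtain ⟨b, hb, _, hs, rfl⟩ := Submodule.mem_sup.1 hy'
    obtain ⟨c, rfl⟩ := Submodule.mem_span_singleton.1 hs
    refine ⟨c, (Submodule.Quotient.eq B).2 ?_⟩
    simpa [B] using neg_mem hb
  rw [Submodule.cardQuot_apply, Submodule.cardQuot_apply]
  exact Nat.card_congr ((Submodule.quotEquivOfEq _ _ hker).trans
    (φ.quotKerEquivOfSurjective hφ)).toEquiv.symm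

end FractionalIdeal

section NumberField

variable {𝔞 : FracIdl F} {𝔭 𝔤 : Ideal (𝓞 F)}

theorem HasLevel.charSmul {ζ : IdealChar F 𝔞} (h : HasLevel ζ 𝔤) (ε : (𝓞 F)ˣ) :
    HasLevel (charSmul ε ζ) 𝔤 :=
  fun _ _ hx => h _ _ (Submodule.smul_mem _ _ hx)

theorem HasLevel.of_restrictChar {ζ : IdealChar F 𝔞} (h : HasLevel (restrictChar 𝔭 ζ) 𝔤) :
    HasLevel ζ (𝔤 * 𝔭) := fun x _ hx => by
  have hx' : x ∈ (𝔤 : FracIdl F) * ((𝔭 : FracIdl F) * 𝔞) := by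
    rwa [← mul_assoc, ← FractionalIdeal.coeIdeal_mul]
  exact h x (coeIdeal_mul_le 𝔤 _ hx') hx'

theorem IsTorsionChar.of_restrictChar_mem_charOrbit (h𝔭 : 𝔭 ≠ ⊥)
    {ξ : IdealChar F ((𝔭 : FracIdl F) * 𝔞)} (hξ : IsTorsionChar ξ) {ζ : IdealChar F 𝔞}
    (hζ : restrictChar 𝔭 ζ ∈ charOrbit ξ) : IsTorsionChar ζ := by
  obtain ⟨𝔤, h𝔤, hlevel⟩ := hξ
  obtain ⟨ε, -, hε⟩ := hζ
  exact ⟨𝔤 * 𝔭, mul_ne_zero h𝔤 h𝔭, HasLevel.of_restrictChar (hε ▸ hlevel.charSmul ε)⟩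

end NumberField

theorem character_sum_lemma_general
    (𝔞 : FracIdl F) (h𝔞 : 𝔞 ≠ 0)
    (𝔭 : Ideal (𝓞 F)) (hprime : 𝔭.IsPrime) (h𝔭 : 𝔭 ≠ ⊥)
    (ξ : IdealChar F ((𝔭 : FracIdl F) * 𝔞)) (hξ : IsTorsionChar ξ)
    (hO : (charOrbit ξ).Finite)
    (α : F) (hα : α ∈ (𝔞 : Submodule (𝓞 F) F)) :
    ∃ hS : {ζ : IdealChar F 𝔞 | IsTorsionChar ζ ∧ restrictChar 𝔭 ζ ∈ charOrbit ξ}.Finite,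
      (∀ hmem : α ∈ (((𝔭 : FracIdl F) * 𝔞 : FracIdl F) : Submodule (𝓞 F) F),
          ((Ideal.absNorm 𝔭 : ℂ))⁻¹ * ∑ ζ ∈ hS.toFinset, ζ ⟨α, hα⟩ =
            ∑ η ∈ hO.toFinset, η ⟨α, hmem⟩) ∧
      (α ∉ (((𝔭 : FracIdl F) * 𝔞 : FracIdl F) : Submodule (𝓞 F) F) →
          ((Ideal.absNorm 𝔭 : ℂ))⁻¹ * ∑ ζ ∈ hS.toFinset, ζ ⟨α, hα⟩ = 0) := by
  have hle := FractionalIdeal.coe_le_coe.2 (coeIdeal_mul_le 𝔭 𝔞)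
  set i := (Submodule.inclusion hle).toAddMonoidHom
  have hi : Function.Injective i := Submodule.inclusion_injective hle
  have hS : {ζ : IdealChar F 𝔞 | IsTorsionChar ζ ∧ restrictChar 𝔭 ζ ∈ charOrbit ξ} =
      {ζ | ζ.compAddMonoidHom i ∈ charOrbit ξ} :=
    Set.ext fun ζ => and_iff_right_of_imp (hξ.of_restrictChar_mem_charOrbit h𝔭)
  have hN : (Ideal.absNorm 𝔭 : ℂ) ≠ 0 := Nat.cast_ne_zero.2 (Ideal.absNorm_eq_zero_iff.not.2 h𝔭)
  have hindex : i.range.index = Ideal.absNorm 𝔭 := by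
    rw [← LinearMap.range_toAddSubgroup, Submodule.range_inclusion, ← Submodule.cardQuot,
      FractionalIdeal.cardQuot_comap_coeIdeal_mul h𝔞 (hprime.isMaximal h𝔭), Ideal.absNorm_apply]
  have : i.range.FiniteIndex := ⟨hindex ▸ Ideal.absNorm_eq_zero_iff.not.2 h𝔭⟩
  refine ⟨hS ▸ AddChar.finite_setOf_compAddMonoidHom_mem hO, fun hmem => ?_, fun hα𝔭 => ?_⟩
  · rw [← finsum_mem_eq_finite_toFinset_sum, ← finsum_mem_eq_finite_toFinset_sum, hS,
      show (⟨α, hα⟩ : (𝔞 : Submodule (𝓞 F) F)) = i ⟨α, hmem⟩ from rfl,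
      AddChar.finsum_mem_setOf_compAddMonoidHom_mem_apply hi hO,
      hindex, inv_mul_cancel_left₀ hN]
  · rw [← finsum_mem_eq_finite_toFinset_sum, hS,
      AddChar.finsum_mem_setOf_compAddMonoidHom_mem_of_notMem hO fun ⟨⟨x, hx⟩, hn⟩ =>
        hα𝔭 (by obtain rfl : x = α := congrArg Subtype.val hn; exact hx),
      mul_zero]

/-- Let `F` be a totally real number field, `𝔞` a nonzero fractional ideal, `𝔭` a nonzero
prime ideal, `ξ` a torsion character of `𝔭𝔞` with finite `Δ`-orbit `O`, and `α ∈ 𝔞`.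
Let `S` be the set of torsion characters `ζ` of `𝔞` whose restriction to `𝔭𝔞` lies in `O`.
Then `S` is finite, and `(1/N𝔭) · Σ_{ζ ∈ S} ζ(α)` equals `ξΔ(α) = Σ_{η ∈ O} η(α)` if
`α ∈ 𝔭𝔞`, and equals `0` if `α ∉ 𝔭𝔞`. -/
theorem character_sum_lemma
    (htotreal : Fintype.card (F →+* ℝ) = Module.finrank ℚ F)
    (𝔞 : FracIdl F) (h𝔞 : 𝔞 ≠ 0)
    (𝔭 : Ideal (𝓞 F)) (hprime : 𝔭.IsPrime) (h𝔭 : 𝔭 ≠ ⊥)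
    (ξ : IdealChar F ((𝔭 : FracIdl F) * 𝔞)) (hξ : IsTorsionChar ξ)
    (hO : (charOrbit ξ).Finite)
    (α : F) (hα : α ∈ (𝔞 : Submodule (𝓞 F) F)) :
    ∃ hS : {ζ : IdealChar F 𝔞 | IsTorsionChar ζ ∧ restrictChar 𝔭 ζ ∈ charOrbit ξ}.Finite,
      (∀ hmem : α ∈ (((𝔭 : FracIdl F) * 𝔞 : FracIdl F) : Submodule (𝓞 F) F),
          ((Ideal.absNorm 𝔭 : ℂ))⁻¹ * ∑ ζ ∈ hS.toFinset, ζ ⟨α, hα⟩ =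
            ∑ η ∈ hO.toFinset, η ⟨α, hmem⟩) ∧
      (α ∉ (((𝔭 : FracIdl F) * 𝔞 : FracIdl F) : Submodule (𝓞 F) F) →
          ((Ideal.absNorm 𝔭 : ℂ))⁻¹ * ∑ ζ ∈ hS.toFinset, ζ ⟨α, hα⟩ = 0) :=
  character_sum_lemma_general 𝔞 h𝔞 𝔭 hprime h𝔭 ξ hξ hO α hα
end

section
/- Let F be a totally real number field, 𝔞 a nonzero fractional ideal of F, 𝔤₀ a nonzero integral ideal of 𝓞_F, 𝔭 a nonzero prime ideal of 𝓞_F, and set 𝔤₁ = 𝔭𝔤₀. Let ζ be a torsion character of 𝔞 of level 𝔤₁. Then the restriction of ζ to the fractional ideal 𝔭𝔞 is primitive of level 𝔤₀ (as a torsion character of 𝔭𝔞) if and only if either (a) ζ is primitive of level 𝔤₁, or (b) 𝔭 does not divide 𝔤₀ and ζ is primitive of level 𝔤₀. Moreover the alternatives (a) and (b) are mutually exclusive, and if 𝔭 divides 𝔤₀ only alternative (a) can occur. (This is the component-wise form of the lemma identifying the inverse image of the primitive torsion points: 𝒯'[𝔤₁] = 𝒯₀[𝔤₁] if 𝔭 ∣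 𝔤₀, and 𝒯'[𝔤₁] = 𝒯₀[𝔤₁] ⊔ 𝒯₀[𝔤₀] if 𝔭 ∤ 𝔤₀.) -/
open NumberField
open scoped nonZeroDivisors

variable {F : Type} [Field F] [NumberField F]

/-!
The levels of `ζ` are exactly the ideals contained in its conductor
`𝔣 = {r ∈ 𝓞_F | ζ(r𝔞) = 1}`, so `ζ` is primitive of level `𝔤` iff `𝔤 = 𝔣`. The levels of
the restriction of `ζ` to `𝔭𝔞` are the `𝔤` with `𝔭𝔤 ⊆ 𝔣`, so its conductor is the colon
ideal `𝔣 : 𝔭`. In a Dedekind domain `𝔣 : 𝔭 = 𝔭⁻¹𝔣` if `𝔭 ∣ 𝔣`, while `𝔣 : 𝔭 = 𝔣` if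
`𝔭 ∤ 𝔣` because `𝔭` and `𝔣` are then coprime; this yields the two alternatives.
-/

namespace Ideal

variable {R : Type*} [CommRing R]

theorem le_colon_iff_mul_le {𝔭 𝔠 𝔤 : Ideal R} : 𝔤 ≤ 𝔠.colon 𝔭 ↔ 𝔭 * 𝔤 ≤ 𝔠 := by
  rw [mul_comm, mul_le]
  exact forall₂_congr fun _ _ => Submodule.mem_colon

theorem colon_eq_self_of_isCoprime {𝔭 𝔠 : Ideal R} (h : IsCoprime 𝔭 𝔠) : 𝔠.colon 𝔭 = 𝔠 := by
  refine le_antisymm ?_ le_colon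
  calc 𝔠.colon 𝔭 = (𝔭 ⊔ 𝔠) * 𝔠.colon 𝔭 := by rw [h.sup_eq, top_mul]
    _ = 𝔭 * 𝔠.colon 𝔭 ⊔ 𝔠 * 𝔠.colon 𝔭 := sup_mul _ _ _
    _ ≤ 𝔠 := sup_le (le_colon_iff_mul_le.1 le_rfl) mul_le_left

variable [IsDedekindDomain R]

theorem mul_colon_cancel_left {𝔭 : Ideal R} (hp : 𝔭 ≠ ⊥) (𝔡 : Ideal R) :
    (𝔭 * 𝔡).colon 𝔭 = 𝔡 :=
  eq_of_forall_le_iff fun 𝔤 => by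
    rw [le_colon_iff_mul_le, ← dvd_iff_le, ← dvd_iff_le, mul_dvd_mul_iff_left hp]

theorem eq_colon_iff {𝔭 : Ideal R} (hp : 𝔭.IsMaximal) (hp0 : 𝔭 ≠ ⊥) (𝔠 𝔤 : Ideal R) :
    𝔤 = 𝔠.colon 𝔭 ↔ 𝔭 * 𝔤 = 𝔠 ∨ (¬ 𝔭 ∣ 𝔤 ∧ 𝔤 = 𝔠) := by
  by_cases hdvd : 𝔭 ∣ 𝔠
  · obtain ⟨𝔡, rfl⟩ := hdvd
    rw [mul_colon_cancel_left hp0]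
    refine ⟨fun h => Or.inl (h ▸ rfl), ?_⟩
    rintro (h | ⟨hnd, rfl⟩)
    · exact mul_left_cancel₀ hp0 h
    · exact absurd (dvd_mul_right _ _) hnd
  · have hcop : IsCoprime 𝔭 𝔠 :=
      isCoprime_iff_sup_eq.2 (hp.1.lt_iff.1 (left_lt_sup.2 (mt dvd_iff_le.2 hdvd)))
    rw [colon_eq_self_of_isCoprime hcop]
    refine ⟨fun h => Or.inr ⟨h ▸ hdvd, h⟩, ?_⟩
    rintro (h | ⟨-, h⟩)
    · exact absurd ⟨𝔤, h.symm⟩ hdvd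
    · exact h

end Ideal

namespace IdealChar

variable {𝔞 : FracIdl F}

def conductor (ζ : IdealChar F 𝔞) : Ideal (𝓞 F) where
  carrier := {r | ∀ α, ζ (r • α) = 1}
  add_mem' hr hs α := by rw [add_smul, AddChar.map_add_eq_mul, hr, hs, one_mul]
  zero_mem' α := by rw [zero_smul, AddChar.map_zero_eq_one]
  smul_mem' s r hr α := by rw [smul_eq_mul, mul_comm, mul_smul]; exact hr _

theorem hasLevel_iff_le_conductor {ζ : IdealChar F 𝔞} {𝔤 : Ideal (𝓞 F)} :
    HasLevel ζ 𝔤 ↔ 𝔤 ≤ ζ.conductor := by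
  refine ⟨fun h r hr α => h _ _ ?_, fun h x _ hx => ?_⟩
  · rw [Algebra.smul_def]
    exact FractionalIdeal.mul_mem_mul ((FractionalIdeal.mem_coeIdeal _).2 ⟨r, hr, rfl⟩) α.2
  · obtain ⟨_, hζ⟩ := FractionalIdeal.mul_induction_on
      (C := fun x => ∃ hx : x ∈ (𝔞 : Submodule (𝓞 F) F), ζ ⟨x, hx⟩ = 1) hx
      (fun i hi α hα => by
        obtain ⟨r, hr, rfl⟩ := (FractionalIdeal.mem_coeIdeal _).1 hi
        rw [← Algebra.smul_def]
        exact ⟨_, h hr ⟨α, hα⟩⟩)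
      (fun x y ⟨hx, hζx⟩ ⟨hy, hζy⟩ => ⟨add_mem hx hy, by
        change ζ (⟨x, hx⟩ + ⟨y, hy⟩) = 1
        rw [AddChar.map_add_eq_mul, hζx, hζy, one_mul]⟩)
    exact hζ

theorem isPrimitiveChar_iff_eq_conductor {ζ : IdealChar F 𝔞} {𝔤 : Ideal (𝓞 F)} :
    IsPrimitiveChar ζ 𝔤 ↔ 𝔤 = ζ.conductor := by
  simp only [IsPrimitiveChar, hasLevel_iff_le_conductor]
  refine ⟨fun ⟨hle, hmax⟩ => of_not_not fun hne => hmax _ (hle.lt_of_ne hne) le_rfl, ?_⟩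
  rintro rfl
  exact ⟨le_rfl, fun _ hlt hle => hlt.not_ge hle⟩

theorem hasLevel_restrictChar_iff {𝔭 𝔤 : Ideal (𝓞 F)} {ζ : IdealChar F 𝔞} :
    HasLevel (restrictChar 𝔭 ζ) 𝔤 ↔ HasLevel ζ (𝔭 * 𝔤) := by
  have hassoc : ((𝔭 * 𝔤 : Ideal (𝓞 F)) : FracIdl F) * 𝔞 = 𝔤 * (𝔭 * 𝔞) := by
    rw [FractionalIdeal.coeIdeal_mul, mul_comm (𝔭 : FracIdl F), mul_assoc]
  rw [HasLevel, HasLevel, hassoc]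
  exact ⟨fun h x _ hx => h x (coeIdeal_mul_le 𝔤 _ hx) hx, fun h x _ hx => h x _ hx⟩

theorem conductor_restrictChar (𝔭 : Ideal (𝓞 F)) (ζ : IdealChar F 𝔞) :
    (restrictChar 𝔭 ζ).conductor = ζ.conductor.colon 𝔭 :=
  eq_of_forall_le_iff fun 𝔤 => by
    rw [← hasLevel_iff_le_conductor, hasLevel_restrictChar_iff, hasLevel_iff_le_conductor,
      Ideal.le_colon_iff_mul_le]

end IdealChar

theorem restrict_primitive_iff_general
    (𝔞 : FracIdl F)
    (𝔤₀ : Ideal (𝓞 F))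
    (𝔭 : Ideal (𝓞 F)) (hprime : 𝔭.IsPrime) (h𝔭 : 𝔭 ≠ ⊥)
    (ζ : IdealChar F 𝔞) :
    (IsPrimitiveChar (restrictChar 𝔭 ζ) 𝔤₀ ↔
        (IsPrimitiveChar ζ (𝔭 * 𝔤₀) ∨ (¬ 𝔭 ∣ 𝔤₀ ∧ IsPrimitiveChar ζ 𝔤₀))) ∧
    ¬ (IsPrimitiveChar ζ (𝔭 * 𝔤₀) ∧ (¬ 𝔭 ∣ 𝔤₀ ∧ IsPrimitiveChar ζ 𝔤₀)) ∧
    (𝔭 ∣ 𝔤₀ → IsPrimitiveChar (restrictChar 𝔭 ζ) 𝔤₀ → IsPrimitiveChar ζ (𝔭 * 𝔤₀)) := by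
  simp only [IdealChar.isPrimitiveChar_iff_eq_conductor, IdealChar.conductor_restrictChar]
  have key := Ideal.eq_colon_iff (hprime.isMaximal h𝔭) h𝔭 ζ.conductor 𝔤₀
  refine ⟨key, ?_, fun hdvd h => (key.1 h).resolve_right fun h' => h'.1 hdvd⟩
  rintro ⟨h, hndvd, h₀⟩
  rw [h₀, ← h] at hndvd
  exact hndvd (dvd_mul_right _ _)

/-- Let `𝔞` be a nonzero fractional ideal of a totally real number field `F`, `𝔤₀` a
nonzero integral ideal, `𝔭` a nonzero prime ideal, `𝔤₁ = 𝔭𝔤₀`, and `ζ` a character of `𝔞`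
of level `𝔤₁`. Then the restriction of `ζ` to `𝔭𝔞` is primitive of level `𝔤₀` if and only
if either (a) `ζ` is primitive of level `𝔤₁`, or (b) `𝔭 ∤ 𝔤₀` and `ζ` is primitive of
level `𝔤₀`; moreover (a) and (b) are mutually exclusive, and if `𝔭 ∣ 𝔤₀` only
alternative (a) can occur. -/
theorem restrict_primitive_iff
    (htotreal : Fintype.card (F →+* ℝ) = Module.finrank ℚ F)
    (𝔞 : FracIdl F) (h𝔞 : 𝔞 ≠ 0)
    (𝔤₀ : Ideal (𝓞 F)) (h𝔤₀ : 𝔤₀ ≠ 0)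
    (𝔭 : Ideal (𝓞 F)) (hprime : 𝔭.IsPrime) (h𝔭 : 𝔭 ≠ ⊥)
    (ζ : IdealChar F 𝔞) (hlevel : HasLevel ζ (𝔭 * 𝔤₀)) :
    (IsPrimitiveChar (restrictChar 𝔭 ζ) 𝔤₀ ↔
        (IsPrimitiveChar ζ (𝔭 * 𝔤₀) ∨ (¬ 𝔭 ∣ 𝔤₀ ∧ IsPrimitiveChar ζ 𝔤₀))) ∧
    ¬ (IsPrimitiveChar ζ (𝔭 * 𝔤₀) ∧ (¬ 𝔭 ∣ 𝔤₀ ∧ IsPrimitiveChar ζ 𝔤₀)) ∧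
    (𝔭 ∣ 𝔤₀ → IsPrimitiveChar (restrictChar 𝔭 ζ) 𝔤₀ → IsPrimitiveChar ζ (𝔭 * 𝔤₀)) :=
  restrict_primitive_iff_general 𝔞 𝔤₀ 𝔭 hprime h𝔭 ζ
end
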